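/- arXiv:0909.3968 — 3 statements merged into one kernel-verified Lean document; each statement's English description precedes it below -/
import Mathlib

section
/- Let p be a prime and let n ≥ 1, k ≥ 1, j ≥ n be integers such that (p−1)·p^{n−1} divides 2k. Then for every integer r ≥ 1, σ_{j+2k}(r) ≡ σ_j(r) (mod p^n). -/
/-!
For `d` coprime to `p`, Euler's theorem gives `d ^ 2k ≡ 1 (mod p^n)`, because `2k` is a multiple
of `φ(p^n) = (p - 1) p^(n-1)`. For `p ∣ d`, both `d ^ (j + 2k)` and `d ^ j` vanish mod `p^n`
since `j ≥ n`. Hence the congruence holds divisor by divisor.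
-/

open Nat

theorem Nat.pow_add_modEq_pow_of_totient_dvd {x m j e : ℕ} (h : x.Coprime m) (he : φ m ∣ e) :
    x ^ (j + e) ≡ x ^ j [MOD m] := by
  obtain ⟨c, rfl⟩ := he
  calc x ^ (j + φ m * c) = x ^ j * (x ^ φ m) ^ c := by rw [pow_add, pow_mul]
    _ ≡ x ^ j * 1 ^ c [MOD m] := ((ModEq.pow_totient h).pow c).mul_left _
    _ = x ^ j := by rw [one_pow, mul_one]

theorem Nat.pow_add_modEq_pow_of_totient_prime_pow_dvd {p n j e : ℕ} (hp : p.Prime)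
    (hj : n ≤ j) (he : φ (p ^ n) ∣ e) (x : ℕ) : x ^ (j + e) ≡ x ^ j [MOD p ^ n] := by
  by_cases hpx : p ∣ x
  · have hxj : p ^ n ∣ x ^ j := (pow_dvd_pow_of_dvd hpx n).trans (pow_dvd_pow x hj)
    have hxje : p ^ n ∣ x ^ (j + e) := hxj.trans (pow_dvd_pow x (le_add_right j e))
    exact (modEq_zero_iff_dvd.mpr hxje).trans (modEq_zero_iff_dvd.mpr hxj).symm
  · exact pow_add_modEq_pow_of_totient_dvd
      ((hp.coprime_iff_not_dvd.mpr hpx).symm.pow_right n) he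

theorem sigma_modeq_of_dvd_general (p n k j : ℕ) (hp : p.Prime) (hn : 1 ≤ n)
    (hj : n ≤ j) (hdvd : (p - 1) * p ^ (n - 1) ∣ 2 * k) (r : ℕ) :
    (∑ d ∈ r.divisors, d ^ (j + 2 * k)) ≡ (∑ d ∈ r.divisors, d ^ j) [MOD p ^ n] := by
  have htot : φ (p ^ n) ∣ 2 * k := by
    rwa [totient_prime_pow hp hn, mul_comm]
  exact ModEq.sum fun d _ => pow_add_modEq_pow_of_totient_prime_pow_dvd hp hj htot d

/-- Let `p` be a prime and `n ≥ 1`, `k ≥ 1`, `j ≥ n` be integers with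
`(p−1)·p^(n−1) ∣ 2k`. Then for every `r ≥ 1`, `σ_{j+2k}(r) ≡ σ_j(r) (mod p^n)`. -/
theorem sigma_modeq_of_dvd (p n k j : ℕ) (hp : p.Prime) (hn : 1 ≤ n) (hk : 1 ≤ k)
    (hj : n ≤ j) (hdvd : (p - 1) * p ^ (n - 1) ∣ 2 * k) (r : ℕ) (hr : 1 ≤ r) :
    (∑ d ∈ r.divisors, d ^ (j + 2 * k)) ≡ (∑ d ∈ r.divisors, d ^ j) [MOD p ^ n] :=
  sigma_modeq_of_dvd_general p n k j hp hn hj hdvd r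
end

section
/- Let n ≥ 1 be an integer, let t be an odd positive integer, and let j ≥ n + 2 be an integer. Then for every integer r ≥ 1, σ_{j + t·2^n}(r) ≡ σ_j(r) (mod 2^{n+2}). -/
/-!
For even `d` both `d ^ (j + t * 2 ^ n)` and `d ^ j` vanish modulo `2 ^ (n + 2)` because
`j ≥ n + 2`. For odd `d`, the group of units modulo `2 ^ (n + 2)` has exponent `2 ^ n`: an odd
square is `1` modulo `8`, and each further squaring gains one factor of `2`, since
`a ^ 2 - 1 = (a - 1) * (a + 1)` with `a + 1` even. Hence `d ^ (t * 2 ^ n) ≡ 1`, and the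
divisor sums agree term by term.
-/

theorem Int.sq_modEq_one_of_odd (a : ℤ) (ha : Odd a) : a ^ 2 ≡ 1 [ZMOD 8] := by
  obtain ⟨m, rfl⟩ := ha
  obtain ⟨c, hc⟩ := Int.two_dvd_mul_add_one m
  refine (Int.modEq_of_dvd ⟨c, ?_⟩).symm
  linear_combination 4 * hc

theorem Int.sq_modEq_one_two_pow_succ {a : ℤ} {k : ℕ} (hk : k ≠ 0)
    (h : a ≡ 1 [ZMOD 2 ^ k]) : a ^ 2 ≡ 1 [ZMOD 2 ^ (k + 1)] := by
  have hsub : 2 ^ k ∣ a - 1 := h.symm.dvd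
  have hadd : 2 ∣ a + 1 := by
    have h2 : (2 : ℤ) ∣ 2 ^ k := dvd_pow_self 2 hk
    rw [show a + 1 = a - 1 + 2 by ring]
    exact (h2.trans hsub).add (dvd_refl 2)
  refine (Int.modEq_of_dvd ?_).symm
  rw [pow_succ, show a ^ 2 - 1 = (a - 1) * (a + 1) by ring]
  exact mul_dvd_mul hsub hadd

theorem Int.pow_two_pow_modEq_one_of_odd {a : ℤ} (ha : Odd a) {n : ℕ} (hn : n ≠ 0) :
    a ^ 2 ^ n ≡ 1 [ZMOD 2 ^ (n + 2)] := by
  obtain ⟨m, rfl⟩ := Nat.exists_eq_succ_of_ne_zero hn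
  induction m with
  | zero => exact a.sq_modEq_one_of_odd ha
  | succ m ih =>
    rw [pow_succ 2 (m + 1), pow_mul]
    exact Int.sq_modEq_one_two_pow_succ (by lia) (ih m.succ_ne_zero)

theorem Nat.pow_two_pow_modEq_one_of_odd {d : ℕ} (hd : Odd d) {n : ℕ} (hn : n ≠ 0) :
    d ^ 2 ^ n ≡ 1 [MOD 2 ^ (n + 2)] := by
  have h := Int.pow_two_pow_modEq_one_of_odd ((Int.odd_coe_nat d).mpr hd) hn
  exact Int.natCast_modEq_iff.mp (by exact_mod_cast h)

theorem Nat.pow_add_mul_two_pow_modEq (d t : ℕ) {n j : ℕ} (hn : n ≠ 0) (hj : n + 2 ≤ j) :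
    d ^ (j + t * 2 ^ n) ≡ d ^ j [MOD 2 ^ (n + 2)] := by
  rcases Nat.even_or_odd d with hd | hd
  · have hdvd : 2 ^ (n + 2) ∣ d ^ j :=
      (Nat.pow_dvd_pow 2 hj).trans (pow_dvd_pow_of_dvd hd.two_dvd j)
    have hdvd' : 2 ^ (n + 2) ∣ d ^ (j + t * 2 ^ n) :=
      hdvd.trans (Nat.pow_dvd_pow d (Nat.le_add_right _ _))
    exact (Nat.modEq_zero_iff_dvd.mpr hdvd').trans (Nat.modEq_zero_iff_dvd.mpr hdvd).symm
  · rw [pow_add d, mul_comm t, pow_mul d]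
    simpa using (Nat.ModEq.refl (d ^ j)).mul ((Nat.pow_two_pow_modEq_one_of_odd hd hn).pow t)

theorem sigma_modeq_two_adic_general (n t j : ℕ) (hn : 1 ≤ n)
    (hj : n + 2 ≤ j) (r : ℕ) :
    (∑ d ∈ r.divisors, d ^ (j + t * 2 ^ n)) ≡
      (∑ d ∈ r.divisors, d ^ j) [MOD 2 ^ (n + 2)] :=
  Nat.ModEq.sum fun d _ => Nat.pow_add_mul_two_pow_modEq d t (Nat.pos_iff_ne_zero.mp hn) hj

/-- Let `n ≥ 1`, let `t` be an odd positive integer, and let `j ≥ n + 2`. Then for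
every `r ≥ 1`, `σ_{j+t·2^n}(r) ≡ σ_j(r) (mod 2^(n+2))`. -/
theorem sigma_modeq_two_adic (n t j : ℕ) (hn : 1 ≤ n) (ht : Odd t) (ht' : 0 < t)
    (hj : n + 2 ≤ j) (r : ℕ) (hr : 1 ≤ r) :
    (∑ d ∈ r.divisors, d ^ (j + t * 2 ^ n)) ≡
      (∑ d ∈ r.divisors, d ^ j) [MOD 2 ^ (n + 2)] :=
  sigma_modeq_two_adic_general n t j hn hj r
end

section
/- Let m ≥ 0 and a ≥ 0 be integers, set k = (2a+1)·2^{m+1}, and let k' ≥ k be an integer with (k, k') ≠ (2, 2). Then for every integer r ≥ 1, 2^{m+4} divides σ_{2k'−1+2k}(r) − σ_{2k'−1}(r). -/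
/-!
Termwise, `d ^ (e + 2k) - d ^ e = d ^ e * (d ^ (2k) - 1)` with `e = 2k' - 1`. For even `d` the
first factor is divisible by `2 ^ e`, and `e ≥ m + 4` since `k' ≥ k ≥ 2 ^ (m + 1)` (with
`k' ≥ 3` when `m = 0`). For odd `d` the second factor is divisible by `d ^ (2 ^ (m + 2)) - 1`,
as `2 ^ (m + 2) ∣ 2k`; repeated factoring `x ^ 2 - 1 = (x - 1) (x + 1)`, starting from
`8 ∣ d ^ 2 - 1`, shows that this is divisible by `2 ^ (m + 4)`.
-/

lemma Int.two_pow_add_three_dvd_pow_two_pow_sub_one {d : ℤ} (hd : Odd d) (n : ℕ) :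
    2 ^ (n + 3) ∣ d ^ 2 ^ (n + 1) - 1 := by
  induction n with
  | zero => simpa using Int.eight_dvd_sq_sub_one_of_odd hd
  | succ n ih =>
    have hfactor : d ^ 2 ^ (n + 2) - 1 = (d ^ 2 ^ (n + 1) - 1) * (d ^ 2 ^ (n + 1) + 1) := by
      rw [pow_succ 2 (n + 1), pow_mul]
      ring
    rw [hfactor, pow_succ]
    exact mul_dvd_mul ih hd.pow.add_one.two_dvd

lemma Int.two_pow_add_three_dvd_pow_sub_one {d : ℤ} (hd : Odd d) {n f : ℕ}
    (hf : 2 ^ (n + 1) ∣ f) : 2 ^ (n + 3) ∣ d ^ f - 1 := by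
  obtain ⟨c, rfl⟩ := hf
  rw [pow_mul]
  exact (two_pow_add_three_dvd_pow_two_pow_sub_one hd n).trans (sub_one_dvd_pow_sub_one _ c)

lemma Int.two_pow_add_three_dvd_pow_add_sub_pow (d : ℤ) {n e f : ℕ} (he : n + 3 ≤ e)
    (hf : 2 ^ (n + 1) ∣ f) : 2 ^ (n + 3) ∣ d ^ (e + f) - d ^ e := by
  rw [pow_add d, ← mul_sub_one]
  rcases Int.even_or_odd d with heven | hodd
  · exact ((pow_dvd_pow 2 he).trans (pow_dvd_pow_of_dvd heven.two_dvd e)).mul_right _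
  · exact (two_pow_add_three_dvd_pow_sub_one hodd hf).mul_left _

lemma add_five_le_two_mul_of_two_pow_le {m k k' : ℕ} (hk : 2 ^ (m + 1) ≤ k) (hk' : k ≤ k')
    (hne : (k, k') ≠ (2, 2)) : m + 5 ≤ 2 * k' := by
  rcases Nat.eq_zero_or_pos m with rfl | hm
  · have : k ≠ 2 ∨ k' ≠ 2 := by simpa only [ne_eq, Prod.mk.injEq, not_and_or] using hne
    omega
  · have hlt : m < 2 ^ m := Nat.lt_two_pow_self
    rw [pow_succ] at hk
    omega

theorem pow_dvd_sigma_sub_sigma_two_adic_general (m a k k' : ℕ)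
    (hk : k = (2 * a + 1) * 2 ^ (m + 1)) (hk' : k ≤ k') (hne : (k, k') ≠ (2, 2))
    (r : ℕ) :
    (2 : ℤ) ^ (m + 4) ∣ (∑ d ∈ r.divisors, (d : ℤ) ^ (2 * k' - 1 + 2 * k)) -
      (∑ d ∈ r.divisors, (d : ℤ) ^ (2 * k' - 1)) := by
  have hle : 2 ^ (m + 1) ≤ k := hk ▸ Nat.le_mul_of_pos_left _ (by omega)
  have he : m + 1 + 3 ≤ 2 * k' - 1 := by
    have := add_five_le_two_mul_of_two_pow_le hle hk' hne
    omega
  have hf : 2 ^ (m + 1 + 1) ∣ 2 * k := ⟨2 * a + 1, by rw [hk, pow_succ]; ring⟩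
  rw [← Finset.sum_sub_distrib]
  exact Finset.dvd_sum fun d _ => Int.two_pow_add_three_dvd_pow_add_sub_pow d he hf

/-- Let `m ≥ 0` and `a ≥ 0` be integers, set `k = (2a+1)·2^(m+1)`, and let
`k' ≥ k` with `(k, k') ≠ (2, 2)`. Then for every `r ≥ 1`,
`2^(m+4)` divides `σ_{2k'−1+2k}(r) − σ_{2k'−1}(r)`. -/
theorem pow_dvd_sigma_sub_sigma_two_adic (m a k k' : ℕ)
    (hk : k = (2 * a + 1) * 2 ^ (m + 1)) (hk' : k ≤ k') (hne : (k, k') ≠ (2, 2))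
    (r : ℕ) (hr : 1 ≤ r) :
    (2 : ℤ) ^ (m + 4) ∣ (∑ d ∈ r.divisors, (d : ℤ) ^ (2 * k' - 1 + 2 * k)) -
      (∑ d ∈ r.divisors, (d : ℤ) ^ (2 * k' - 1)) :=
  pow_dvd_sigma_sub_sigma_two_adic_general m a k k' hk hk' hne r
end
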